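/- arXiv:2109.00764 — 2 statements merged into one kernel-verified Lean document; each statement's English description precedes it below -/
import Mathlib

section
/- Let λ_1 ≥ λ_2 ≥ … ≥ λ_n ≥ 0 be nonnegative real numbers, let q ∈ {0,…,n}, and let σ_n^j(λ) denote the j-th elementary symmetric function of λ_1,…,λ_n. Then Σ_{j=0}^{q} (−1)^{q−j} σ_n^j(λ) − 1_{{λ_{q+1} < 1}} · (−1)^q · Π_{j=1}^{n} (1 − λ_j) ≥ 0, where 1_{{λ_{q+1} < 1}} is 1 if q < n and λ_{q+1} < 1 (with the convention that for q = n the indicator is 1), and 0 otherwise. -/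
open Finset

/-! Write `S_q = ∑_{j ≤ q} (-1)^(q-j) σ_j` and `m` for the number of `λ_i ≥ 1`. For decreasing `λ`
the indicator is `1` exactly when `m ≤ q`, so the order of the `λ_i` drops out: the claim is that
`S_q ≥ (-1)^q ∏ (1 - λ_i)` when `m ≤ q`, and `S_q ≥ 0` when `q < m`. Both bounds are proved together
by adjoining one variable `a ≥ 0` at a time, using `S_{q+1}(λ, a) = S_{q+1}(λ) + a S_q(λ)`; in the
boundary case `m = q + 1` the missing information is the sign of `∏ (1 - λ_i)`, which is `(-1)^m`. -/

namespace Multiset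

variable {R : Type*}

section CommSemiring

variable [CommSemiring R]

theorem esymm_zero (s : Multiset R) : s.esymm 0 = 1 := by
  simp [esymm, powersetCard_zero_left]

theorem esymm_cons_succ (a : R) (s : Multiset R) (n : ℕ) :
    (a ::ₘ s).esymm (n + 1) = s.esymm (n + 1) + a * s.esymm n := by
  simp [esymm, powersetCard_cons, map_map, sum_map_mul_left]

end CommSemiring

section CommRing

variable [CommRing R]

noncomputable def altEsymmSum (s : Multiset R) (q : ℕ) : R :=
  ∑ j ∈ Finset.range (q + 1), (-1) ^ (q - j) * s.esymm j

theorem altEsymmSum_zero_left (q : ℕ) : altEsymmSum (0 : Multiset R) q = (-1) ^ q := by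
  rw [altEsymmSum, sum_range_succ']
  simp [esymm, powersetCard_zero_right]

theorem altEsymmSum_zero_right (s : Multiset R) : altEsymmSum s 0 = 1 := by
  simp [altEsymmSum, esymm_zero]

theorem altEsymmSum_cons_succ (a : R) (s : Multiset R) (q : ℕ) :
    altEsymmSum (a ::ₘ s) (q + 1) = altEsymmSum s (q + 1) + a * altEsymmSum s q := by
  simp only [altEsymmSum, sum_range_succ' _ (q + 1), esymm_cons_succ, esymm_zero,
    Nat.add_sub_add_right, mul_add, sum_add_distrib, mul_sum, mul_left_comm a]
  ring

section Ordered

variable [LinearOrder R] [IsStrictOrderedRing R]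

theorem zero_le_neg_one_pow_mul_prod_map_one_sub (s : Multiset R) :
    0 ≤ (-1) ^ s.countP (1 ≤ ·) * (s.map (1 - ·)).prod := by
  induction s using Multiset.induction_on with
  | empty => simp
  | cons a s ih =>
    rw [map_cons, prod_cons]
    by_cases ha : 1 ≤ a
    · rw [countP_cons_of_pos _ ha, pow_succ]
      nlinarith
    · rw [countP_cons_of_neg _ ha]
      nlinarith

theorem altEsymmSum_bounds (s : Multiset R) (hs : ∀ x ∈ s, 0 ≤ x) (q : ℕ) :
    (s.countP (1 ≤ ·) ≤ q → (-1) ^ q * (s.map (1 - ·)).prod ≤ altEsymmSum s q) ∧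
      (q < s.countP (1 ≤ ·) → 0 ≤ altEsymmSum s q) := by
  induction s using Multiset.induction_on generalizing q with
  | empty => simp [altEsymmSum_zero_left]
  | cons a s ih =>
    have ha : 0 ≤ a := hs a (mem_cons_self a s)
    have ih := ih fun x hx => hs x (mem_cons_of_mem hx)
    rw [map_cons, prod_cons, countP_cons]
    set m := s.countP (1 ≤ ·)
    set P := (s.map (1 - ·)).prod
    cases q with
    | zero =>
      have hP := (ih 0).1
      rw [altEsymmSum_zero_right, pow_zero, one_mul] at hP ⊢
      refine ⟨fun hm => ?_, fun _ => zero_le_one⟩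
      split_ifs at hm with h1
      · omega
      · nlinarith [hP (by omega)]
    | succ q =>
      have hsign : 0 ≤ (-1) ^ m * P := zero_le_neg_one_pow_mul_prod_map_one_sub s
      obtain ⟨hle_succ, hnonneg_succ⟩ := ih (q + 1)
      obtain ⟨hle, hnonneg⟩ := ih q
      rw [altEsymmSum_cons_succ, pow_succ]
      rw [pow_succ] at hle_succ
      rcases lt_trichotomy m (q + 1) with hm | hm | hm
      · have h1 := hle_succ hm.le
        have h0 := mul_le_mul_of_nonneg_left (hle (by omega)) ha
        refine ⟨fun _ => by nlinarith, fun h => ?_⟩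
        split_ifs at h <;> omega
      · have h1 := hle_succ hm.le
        have h0 := mul_nonneg ha (hnonneg (by omega))
        rw [hm, pow_succ] at hsign
        split_ifs with h
        · exact ⟨fun _ => by omega, fun _ => by nlinarith⟩
        · exact ⟨fun _ => by nlinarith, fun _ => by omega⟩
      · have h1 := hnonneg_succ hm
        have h0 := mul_nonneg ha (hnonneg (by omega))
        refine ⟨fun h => ?_, fun _ => by linarith⟩
        split_ifs at h <;> omega

end Ordered

end CommRing

end Multiset

theorem Fin.lt_iff_card_filter_le_le_of_antitone {α : Type*} [LinearOrder α] {n : ℕ}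
    {x : Fin n → α} (hx : Antitone x) (c : α) (i : Fin n) : x i < c ↔ #{j | c ≤ x j} ≤ i := by
  constructor
  · intro hi
    calc #{j | c ≤ x j} ≤ #(Iio i) :=
          card_le_card fun j hj => mem_Iio.2 <| lt_of_not_ge fun hij =>
            (hi.trans_le ((mem_filter.1 hj).2)).not_ge (hx hij)
      _ = i := Fin.card_Iio i
  · intro hcard
    by_contra! hi
    have : #(Iic i) ≤ #{j | c ≤ x j} :=
      card_le_card fun j hj => mem_filter.2 ⟨mem_univ j, hi.trans (hx (mem_Iic.1 hj))⟩
    rw [Fin.card_Iic] at this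
    omega

theorem stmt_1_general (n q : ℕ) (lam : Fin n → ℝ)
    (hmono : ∀ i j : Fin n, i ≤ j → lam j ≤ lam i)
    (hpos : ∀ i, 0 ≤ lam i) :
    0 ≤ (∑ j ∈ Finset.range (q + 1), (-1 : ℝ) ^ (q - j) *
          (∑ A ∈ Finset.univ.powersetCard j, ∏ i ∈ A, lam i))
        - (if h : q < n then (if lam ⟨q, h⟩ < 1 then (1 : ℝ) else 0) else 1) *
            ((-1 : ℝ) ^ q * ∏ i, (1 - lam i)) := by
  set s : Multiset ℝ := univ.val.map lam
  have hsum : s.altEsymmSum q = ∑ j ∈ Finset.range (q + 1), (-1 : ℝ) ^ (q - j) *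
      (∑ A ∈ Finset.univ.powersetCard j, ∏ i ∈ A, lam i) := by
    simp only [s, Multiset.altEsymmSum, Finset.esymm_map_val]
  have hprod : (s.map (1 - ·)).prod = ∏ i, (1 - lam i) := by
    simp only [s, Multiset.map_map, Function.comp_def, prod_map_val]
  have hcard : s.countP (1 ≤ ·) = #{i | 1 ≤ lam i} := by
    exact Multiset.countP_map lam univ.val _
  have hind : (if h : q < n then (if lam ⟨q, h⟩ < 1 then (1 : ℝ) else 0) else 1) =
      if #{i | 1 ≤ lam i} ≤ q then 1 else 0 := by
    by_cases hqn : q < n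
    · simp only [dif_pos hqn, Fin.lt_iff_card_filter_le_le_of_antitone hmono 1 ⟨q, hqn⟩]
    · have : #{i | 1 ≤ lam i} ≤ q := (card_filter_le _ _).trans (by simpa using hqn)
      simp only [dif_neg hqn, if_pos this]
  obtain ⟨hle, hlt⟩ := s.altEsymmSum_bounds (by simpa [s] using hpos) q
  rw [hind, ← hsum, ← hprod, ← hcard]
  split_ifs with h
  · linarith [hle h]
  · linarith [hlt (not_le.1 h)]

/-- Key pointwise lemma for algebraic Morse inequalities:
for `λ₁ ≥ ⋯ ≥ λₙ ≥ 0` and `0 ≤ q ≤ n`,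
`∑_{j≤q} (-1)^{q-j} σⁿⱼ(λ) - 𝟙_{λ_{q+1}<1} (-1)^q ∏ (1-λⱼ) ≥ 0`. -/
theorem stmt_1 (n q : ℕ) (hq : q ≤ n) (lam : Fin n → ℝ)
    (hmono : ∀ i j : Fin n, i ≤ j → lam j ≤ lam i)
    (hpos : ∀ i, 0 ≤ lam i) :
    0 ≤ (∑ j ∈ Finset.range (q + 1), (-1 : ℝ) ^ (q - j) *
          (∑ A ∈ Finset.univ.powersetCard j, ∏ i ∈ A, lam i))
        - (if h : q < n then (if lam ⟨q, h⟩ < 1 then (1 : ℝ) else 0) else 1) *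
            ((-1 : ℝ) ^ q * ∏ i, (1 - lam i)) :=
  stmt_1_general n q lam hmono hpos
end

section
/- For complex numbers a_1, …, a_p with elementary symmetric functions s_0 = 1, s_1, …, s_p, one has Π_{j=1}^{p} (1 + |a_j|^2) ≤ 2^p · Σ_{k=0}^{p} |s_k|^2. -/
/-!
The polynomial `f = ∏ⱼ (X + aⱼ)` has coefficients `s_p, …, s_0` and Mahler measure
`∏ⱼ max(1, |aⱼ|)`, so Landau's inequality `M(f) ≤ ‖f‖₂` gives
`∏ⱼ max(1, |aⱼ|)² ≤ ∑ₖ |s_k|²`; each factor `1 + |aⱼ|²` is at most `2 max(1, |aⱼ|)²`.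
-/

open Finset Polynomial

namespace Polynomial

variable {ι : Type*} (s : Finset ι) (a : ι → ℂ)

lemma mahlerMeasure_prod_X_add_C :
    (∏ i ∈ s, (X + C (a i))).mahlerMeasure = ∏ i ∈ s, max 1 ‖a i‖ := by
  rw [prod_eq_multiset_prod, prod_mahlerMeasure_eq_mahlerMeasure_prod, Multiset.map_map]
  simp

lemma natDegree_prod_X_add_C : (∏ i ∈ s, (X + C (a i))).natDegree = #s := by
  simp [natDegree_prod_of_monic _ _ fun i _ => monic_X_add_C (a i)]

lemma sum_sq_norm_coeff_prod_X_add_C :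
    ∑ k ∈ (∏ i ∈ s, (X + C (a i))).support, ‖(∏ i ∈ s, (X + C (a i))).coeff k‖ ^ 2
      = ∑ k ∈ range (#s + 1), ‖∑ t ∈ s.powersetCard k, ∏ i ∈ t, a i‖ ^ 2 := by
  set f := ∏ i ∈ s, (X + C (a i))
  calc ∑ k ∈ f.support, ‖f.coeff k‖ ^ 2
      = ∑ k ∈ range (#s + 1), ‖f.coeff k‖ ^ 2 := by
        refine sum_subset (natDegree_prod_X_add_C s a ▸ supp_subset_range_natDegree_succ) ?_
        intro k _ hk
        simp [notMem_support_iff.1 hk]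
    _ = ∑ k ∈ range (#s + 1), ‖∑ t ∈ s.powersetCard (#s - k), ∏ i ∈ t, a i‖ ^ 2 := by
        refine sum_congr rfl fun k hk => ?_
        rw [Finset.prod_X_add_C_coeff s a (Nat.lt_succ_iff.1 (mem_range.1 hk))]
    _ = _ := sum_range_reflect (fun k => ‖∑ t ∈ s.powersetCard k, ∏ i ∈ t, a i‖ ^ 2) _

theorem prod_max_one_norm_sq_le_sum_norm_esymm_sq :
    ∏ i ∈ s, max 1 ‖a i‖ ^ 2
      ≤ ∑ k ∈ range (#s + 1), ‖∑ t ∈ s.powersetCard k, ∏ i ∈ t, a i‖ ^ 2 := by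
  have landau := mahlerMeasure_le_sqrt_sum_sq_norm_coeff (∏ i ∈ s, (X + C (a i)))
  rwa [mahlerMeasure_prod_X_add_C, sum_sq_norm_coeff_prod_X_add_C,
    Real.le_sqrt (by positivity) (by positivity), ← prod_pow] at landau

end Polynomial

lemma one_add_sq_le_two_mul_max_one_sq {x : ℝ} (hx : 0 ≤ x) : 1 + x ^ 2 ≤ 2 * max 1 x ^ 2 := by
  rcases le_total x 1 with h | h
  · rw [max_eq_left h]; nlinarith
  · rw [max_eq_right h]; nlinarith

/-- `∏ (1+|aⱼ|²) ≤ 2^p ∑ |s_k|²`, a consequence of Landau's inequality, where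
`s_k` is the `k`-th elementary symmetric function of `a₁,…,a_p`. -/
theorem stmt_8 (p : ℕ) (a : Fin p → ℂ) :
    ∏ j, (1 + ‖a j‖ ^ 2)
      ≤ 2 ^ p * ∑ k ∈ Finset.range (p + 1),
          ‖∑ A ∈ Finset.univ.powersetCard k, ∏ j ∈ A, a j‖ ^ 2 := by
  calc ∏ j, (1 + ‖a j‖ ^ 2)
      ≤ ∏ j, 2 * max 1 ‖a j‖ ^ 2 :=
        prod_le_prod (fun _ _ => by positivity)
          fun j _ => one_add_sq_le_two_mul_max_one_sq (norm_nonneg (a j))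
    _ = 2 ^ p * ∏ j, max 1 ‖a j‖ ^ 2 := by simp [prod_mul_distrib]
    _ ≤ _ := by
        gcongr
        simpa using prod_max_one_norm_sq_le_sum_norm_esymm_sq univ a
end
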